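/- arXiv:1503.06920 — 2 statements merged into one kernel-verified Lean document; each statement's English description precedes it below -/
import Mathlib

section
/- Let q = p^e > 2 be a prime power, r ≥ 1 a divisor of 2e, λ ∈ F* with λ^{p^{tr}} = λ^q for some 0 ≤ t < 2e/r, and k = k_{r,λ}(q). A flag (⟨u₂⟩, L₂) ∈ V(q) is adjacent to (∞, L) in Γ_{r,λ}(q) if and only if there exist an integer 0 ≤ i < k, a ∈ F \ {1}, b ∈ F and c ∈ F* with b + b^q = a^{q+1}, such that (i) u₂ is a scalar multiple of (ac/(1−a), bc/(1−a), c/(1−a)), and (ii) L₂ is the set of absolute points ⟨x,y,z⟩ satisfying (λ^{q p^{ir}} + a^q c)x − cy − (λ^{q p^{ir}} a + b^q c)z = 0. -/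
namespace UnitaryGraphPaper

variable (F : Type) [Field F]

/-- The Hermitian form β((x₁,y₁,z₁),(x₂,y₂,z₂)) = −x₁x₂^q + y₁z₂^q + z₁y₂^q. -/
def beta (q : ℕ) (u v : F × F × F) : F :=
  -(u.1 * v.1 ^ q) + u.2.1 * v.2.2 ^ q + u.2.2 * v.2.1 ^ q

/-- A vector is isotropic if β(u,u) = 0. -/
def Isotropic (q : ℕ) (u : F × F × F) : Prop := beta F q u u = 0

/-- Absolute points: 1-dimensional subspaces spanned by nonzero isotropic vectors. -/
def IsAbsolutePoint (q : ℕ) (P : Submodule F (F × F × F)) : Prop :=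
  ∃ u : F × F × F, u ≠ 0 ∧ Isotropic F q u ∧ P = Submodule.span F {u}

/-- Lines of the Hermitian unital: sets of absolute points contained in a 2-dimensional
subspace spanned by two linearly independent isotropic vectors. -/
def IsUnitalLine (q : ℕ) (l : Set (Submodule F (F × F × F))) : Prop :=
  ∃ u v : F × F × F, Isotropic F q u ∧ Isotropic F q v ∧ LinearIndependent F ![u, v] ∧
    l = {P | IsAbsolutePoint F q P ∧ P ≤ Submodule.span F ({u, v} : Set (F × F × F))}

/-- Flags of the Hermitian unital: incident point-line pairs. -/
def Flag (q : ℕ) : Type :=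
  {Pl : Submodule F (F × F × F) × Set (Submodule F (F × F × F)) //
    IsAbsolutePoint F q Pl.1 ∧ IsUnitalLine F q Pl.2 ∧ Pl.1 ∈ Pl.2}

/-- The set of absolute points ⟨x,y,z⟩ for which the determinant of the 3×3 matrix with
columns (x,y,z), u, w vanishes. -/
def detLine (q : ℕ) (u w : F × F × F) : Set (Submodule F (F × F × F)) :=
  {P | ∃ v : F × F × F, v ≠ 0 ∧ Isotropic F q v ∧ P = Submodule.span F {v} ∧
    (!![v.1, u.1, w.1; v.2.1, u.2.1, w.2.1; v.2.2, u.2.2, w.2.2] : Matrix (Fin 3) (Fin 3) F).det = 0}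

/-- The defining adjacency condition of the unitary graph Γ_{r,λ}(q), q = p^e. -/
def AdjCond (p q e r : ℕ) (lam : F) (v₁ v₂ : Flag F q) : Prop :=
  ∃ i : ℕ, i < 2 * e / r ∧ ∃ u₁ u₂ u₀ : F × F × F,
    u₁ ≠ 0 ∧ Isotropic F q u₁ ∧ v₁.1.1 = Submodule.span F {u₁} ∧
    u₂ ≠ 0 ∧ Isotropic F q u₂ ∧ v₂.1.1 = Submodule.span F {u₂} ∧
    ¬ Isotropic F q u₀ ∧ beta F q u₀ u₁ = 0 ∧ beta F q u₀ u₂ = 0 ∧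
    v₁.1.2 = detLine F q u₁ (u₀ + u₂) ∧
    v₂.1.2 = detLine F q u₂ (u₀ + lam ^ (q * p ^ (i * r)) • u₁)

/-- The unitary graph Γ_{r,λ}(q). -/
def unitaryGraph (p q e r : ℕ) (lam : F) : SimpleGraph (Flag F q) :=
  SimpleGraph.fromRel (AdjCond F p q e r lam)

/-- The absolute point ∞ = ⟨0,1,0⟩. -/
def ptInfty : Submodule F (F × F × F) := Submodule.span F {((0 : F), 1, 0)}

/-- The absolute point 0 = ⟨0,0,1⟩. -/
def ptZero : Submodule F (F × F × F) := Submodule.span F {((0 : F), 0, 1)}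

/-- The line L*: absolute points ⟨x,y,z⟩ with x = 0. -/
def lineLstar (q : ℕ) : Set (Submodule F (F × F × F)) :=
  {P | ∃ v : F × F × F, v ≠ 0 ∧ Isotropic F q v ∧ P = Submodule.span F {v} ∧ v.1 = 0}

/-- The line L: absolute points ⟨x,y,z⟩ with x = z. -/
def lineL (q : ℕ) : Set (Submodule F (F × F × F)) :=
  {P | ∃ v : F × F × F, v ≠ 0 ∧ Isotropic F q v ∧ P = Submodule.span F {v} ∧ v.1 = v.2.2}

/-- The line N(η): absolute points ⟨x,y,z⟩ with y = ηx. -/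
def lineN (q : ℕ) (eta : F) : Set (Submodule F (F × F × F)) :=
  {P | ∃ v : F × F × F, v ≠ 0 ∧ Isotropic F q v ∧ P = Submodule.span F {v} ∧ v.2.1 = eta * v.1}

/-- The line given by the homogenous equation A x + B y + C z = 0 (as a set of absolute
points). -/
def eqnLine (q : ℕ) (A B C : F) : Set (Submodule F (F × F × F)) :=
  {P | ∃ v : F × F × F, v ≠ 0 ∧ Isotropic F q v ∧ P = Submodule.span F {v} ∧
    A * v.1 + B * v.2.1 + C * v.2.2 = 0}

/-- Common neighbours of two vertices in a graph. -/
def commonNbrs {V : Type} (G : SimpleGraph V) (a b : V) : Set V :=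
  {c | G.Adj a c ∧ G.Adj b c}

/-!
Orthogonality to `∞ = ⟨0, 1, 0⟩` forces the auxiliary vector to be `u₀ = (α, β, 0)`, and
`α ≠ 0` because `u₀` is nonisotropic. The absolute points `⟨1, y, 1⟩` (with `y + y^q = 1`) and
`⟨0, 0, 1⟩` show that a determinant line through `∞` with second vector `W` is `L` exactly when
`W.1 = W.3 ≠ 0`; this makes the other flag's vector `z (a, b, 1)` with `a ≠ 1`. Isotropy gives
`b + b^q = a^{q+1}`, orthogonality gives `β = α a^q`, and the second determinant line is the
cross product of two explicit vectors, a multiple of the displayed equation for a suitable `c`.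
As `c` is free, the coefficient `λ^{q p^{ir}}` can be rescaled to any nonzero value, so the
neighbours of `(∞, L)` do not depend on `i`, and those found with `i = 0` are all of them.
-/

section

variable {F} {q : ℕ}

lemma beta_smul_right (u v : F × F × F) (t : F) :
    beta F q u (t • v) = t ^ q * beta F q u v := by
  simp only [beta, Prod.smul_fst, Prod.smul_snd, smul_eq_mul, mul_pow]
  ring

lemma beta_smul_left (u v : F × F × F) (t : F) :
    beta F q (t • u) v = t * beta F q u v := by
  simp only [beta, Prod.smul_fst, Prod.smul_snd, smul_eq_mul]
  ring

lemma isotropic_smul_iff {t : F} (ht : t ≠ 0) (u : F × F × F) :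
    Isotropic F q (t • u) ↔ Isotropic F q u := by
  simp [Isotropic, beta_smul_left, beta_smul_right, ht]

lemma isotropic_mk_one_iff (a b : F) :
    Isotropic F q (a, b, 1) ↔ b + b ^ q = a ^ (q + 1) := by
  rw [Isotropic, beta, pow_succ', one_pow, mul_one, one_mul]
  constructor <;> intro h <;> linear_combination h

lemma mk_div_one_sub_eq_smul (a b c : F) :
    ((a * c / (1 - a), b * c / (1 - a), c / (1 - a)) : F × F × F) = (c / (1 - a)) • (a, b, 1) := by
  simp only [Prod.smul_mk, smul_eq_mul, mul_one]
  ring_nf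

lemma eqnLine_mul {t : F} (ht : t ≠ 0) (A B C : F) :
    eqnLine F q (t * A) (t * B) (t * C) = eqnLine F q A B C := by
  ext P
  refine exists_congr fun v => and_congr_right fun _ => and_congr_right fun _ =>
    and_congr_right fun _ => ?_
  rw [show t * A * v.1 + t * B * v.2.1 + t * C * v.2.2 = t * (A * v.1 + B * v.2.1 + C * v.2.2)
    by ring, mul_eq_zero, or_iff_right ht]

lemma detLine_eq_eqnLine (u w : F × F × F) :
    detLine F q u w = eqnLine F q (u.2.1 * w.2.2 - u.2.2 * w.2.1) (u.2.2 * w.1 - u.1 * w.2.2)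
      (u.1 * w.2.1 - u.2.1 * w.1) := by
  ext P
  refine exists_congr fun v => and_congr_right fun _ => and_congr_right fun _ =>
    and_congr_right fun _ => ?_
  rw [Matrix.det_fin_three]
  simp only [Matrix.of_apply, Matrix.cons_val', Matrix.cons_val_zero, Matrix.cons_val_one,
    Matrix.cons_val_two, Matrix.empty_val', Matrix.cons_val_fin_one, Matrix.head_cons,
    Matrix.tail_cons, Matrix.head_fin_const]
  ring_nf

lemma lineL_eq_eqnLine : lineL F q = eqnLine F q 1 0 (-1) := by
  ext P
  refine exists_congr fun v => and_congr_right fun _ => and_congr_right fun _ =>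
    and_congr_right fun _ => ?_
  rw [← sub_eq_zero]
  ring_nf

lemma span_mem_eqnLine_iff {v : F × F × F} (hv : v ≠ 0) (hiso : Isotropic F q v) (A B C : F) :
    Submodule.span F {v} ∈ eqnLine F q A B C ↔ A * v.1 + B * v.2.1 + C * v.2.2 = 0 := by
  refine ⟨fun ⟨v', _, _, hspan, hv'⟩ => ?_, fun h => ⟨v, hv, hiso, rfl, h⟩⟩
  obtain ⟨t, rfl⟩ := Submodule.span_singleton_eq_span_singleton.1 hspan
  simp only [Units.smul_def, Prod.smul_fst, Prod.smul_snd, smul_eq_mul] at hv'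
  rw [show A * ((t : F) * v.1) + B * (t * v.2.1) + C * (t * v.2.2) =
    t * (A * v.1 + B * v.2.1 + C * v.2.2) by ring, mul_eq_zero] at hv'
  exact hv'.resolve_left t.ne_zero

lemma eq_mk_of_span_eq_ptInfty {u : F × F × F} (h : Submodule.span F {u} = ptInfty F) :
    ∃ s : F, s ≠ 0 ∧ u = (0, s, 0) := by
  obtain ⟨t, rfl⟩ := Submodule.span_singleton_eq_span_singleton.1 h.symm
  exact ⟨t, t.ne_zero, by simp [Units.smul_def]⟩

lemma span_ne_ptInfty {v : F × F × F} (hv : v.2.2 ≠ 0) : Submodule.span F {v} ≠ ptInfty F := by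
  intro h
  obtain ⟨s, -, rfl⟩ := eq_mk_of_span_eq_ptInfty h
  exact hv rfl

lemma detLine_ptInfty (s : F) (W : F × F × F) :
    detLine F q (0, s, 0) W = eqnLine F q (s * W.2.2) 0 (-(s * W.1)) := by
  rw [detLine_eq_eqnLine]
  congr 1 <;> ring

lemma detLine_ptInfty_eq_lineL {s : F} (hs : s ≠ 0) {W : F × F × F} (hW : W.1 = W.2.2)
    (hW0 : W.1 ≠ 0) : detLine F q (0, s, 0) W = lineL F q := by
  rw [detLine_ptInfty, lineL_eq_eqnLine, ← eqnLine_mul (mul_ne_zero hs hW0) 1 0 (-1), hW]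
  congr 1 <;> ring

lemma eq_of_detLine_ptInfty_eq_lineL (hq0 : q ≠ 0) {y : F} (hy : y + y ^ q = 1) {s : F}
    (hs : s ≠ 0) {W : F × F × F} (h : detLine F q (0, s, 0) W = lineL F q) :
    W.1 = W.2.2 ∧ W.1 ≠ 0 := by
  rw [detLine_ptInfty, lineL_eq_eqnLine] at h
  have hy_iso : Isotropic F q (1, y, 1) := by
    rw [isotropic_mk_one_iff, one_pow]
    exact hy
  have h0_iso : Isotropic F q (0, 0, 1) := by
    simp [Isotropic, beta, zero_pow hq0]
  have hy_mem : Submodule.span F {((1 : F), y, 1)} ∈ eqnLine F q (s * W.2.2) 0 (-(s * W.1)) :=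
    h ▸ (span_mem_eqnLine_iff (by simp) hy_iso 1 0 (-1)).2 (by ring)
  have hW := (span_mem_eqnLine_iff (by simp) hy_iso _ _ _).1 hy_mem
  refine ⟨mul_left_cancel₀ hs (by linear_combination -hW), fun hW0 => ?_⟩
  have h0_mem : Submodule.span F {((0 : F), 0, 1)} ∈ eqnLine F q (s * W.2.2) 0 (-(s * W.1)) :=
    (span_mem_eqnLine_iff (by simp) h0_iso _ _ _).2 (by simp [hW0])
  rw [h, span_mem_eqnLine_iff (by simp) h0_iso] at h0_mem
  simp at h0_mem

lemma detLine_smul_mk_eq_eqnLine {a b z α ν s ℓ c : F} (hab : b + b ^ q = a ^ (q + 1))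
    (hz : z ≠ 0) (hℓ : ℓ ≠ 0) (hνs : ν * s ≠ 0) (hc : c * (ν * s) = ℓ * α) :
    detLine F q (z • (a, b, 1)) ((α, α * a ^ q, 0) + ν • (0, s, 0)) =
      eqnLine F q (ℓ + a ^ q * c) (-c) (-(ℓ * a + b ^ q * c)) := by
  set t := -(z * (ν * s)) / ℓ
  have htℓ : t * ℓ = -(z * (ν * s)) := div_mul_cancel₀ _ hℓ
  have htc : t * c = -(z * α) := by
    apply mul_right_cancel₀ hνs
    linear_combination t * hc + α * htℓ
  have ht : t ≠ 0 := div_ne_zero (neg_ne_zero.2 (mul_ne_zero hz hνs)) hℓ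
  rw [detLine_eq_eqnLine, ← eqnLine_mul ht (ℓ + a ^ q * c) (-c) (-(ℓ * a + b ^ q * c))]
  simp only [Prod.smul_mk, Prod.mk_add_mk, smul_eq_mul]
  congr 1
  · linear_combination -htℓ - a ^ q * htc
  · linear_combination htc
  · linear_combination a * htℓ + b ^ q * htc - z * α * hab

variable (q) in
/-- `ℓ` plays the role of `λ^{q p^{ir}}`. -/
def IsNeighborOfInftyL (ℓ : F) (P : Submodule F (F × F × F))
    (l : Set (Submodule F (F × F × F))) : Prop :=
  ∃ a b c : F, a ≠ 1 ∧ c ≠ 0 ∧ b + b ^ q = a ^ (q + 1) ∧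
    P = Submodule.span F {(a * c / (1 - a), b * c / (1 - a), c / (1 - a))} ∧
    l = eqnLine F q (ℓ + a ^ q * c) (-c) (-(ℓ * a + b ^ q * c))

lemma IsNeighborOfInftyL.of_ne_zero {ℓ ℓ' : F} {P : Submodule F (F × F × F)}
    {l : Set (Submodule F (F × F × F))} (h : IsNeighborOfInftyL q ℓ P l) (hℓ : ℓ ≠ 0)
    (hℓ' : ℓ' ≠ 0) : IsNeighborOfInftyL q ℓ' P l := by
  obtain ⟨a, b, c, ha, hc, hab, rfl, rfl⟩ := h
  have ha' : 1 - a ≠ 0 := sub_ne_zero.2 (Ne.symm ha)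
  refine ⟨a, b, c * ℓ' / ℓ, ha, by positivity, hab, ?_, ?_⟩
  · rw [mk_div_one_sub_eq_smul, mk_div_one_sub_eq_smul,
      Submodule.span_singleton_smul_eq (by simp [ha', hc]),
      Submodule.span_singleton_smul_eq (by simp [ha', hc, hℓ, hℓ'])]
  · rw [← eqnLine_mul (div_ne_zero hℓ' hℓ)]
    congr 1 <;> field_simp

lemma IsNeighborOfInftyL.ne_ptInfty {ℓ : F} {P : Submodule F (F × F × F)}
    {l : Set (Submodule F (F × F × F))} (h : IsNeighborOfInftyL q ℓ P l) : P ≠ ptInfty F := by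
  obtain ⟨a, b, c, ha, hc, -, rfl, -⟩ := h
  exact span_ne_ptInfty (div_ne_zero hc (sub_ne_zero.2 (Ne.symm ha)))

lemma isNeighborOfInftyL_of_detLine_eq_lineL (hq0 : q ≠ 0) {y : F} (hy : y + y ^ q = 1)
    {ℓ s μ ν : F} (hℓ : ℓ ≠ 0) (hs : s ≠ 0) (hν : ν ≠ 0) {u₀ u : F × F × F}
    (hu : Isotropic F q u) (hu₀ : ¬ Isotropic F q u₀) (h₀s : beta F q u₀ (0, s, 0) = 0)
    (h₀u : beta F q u₀ u = 0) (hL : detLine F q (0, s, 0) (u₀ + μ • u) = lineL F q) :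
    IsNeighborOfInftyL q ℓ (Submodule.span F {u}) (detLine F q u (u₀ + ν • (0, s, 0))) := by
  obtain ⟨hW, hW0⟩ := eq_of_detLine_ptInfty_eq_lineL hq0 hy hs hL
  obtain ⟨α, β, γ⟩ := u₀
  obtain ⟨x, w, z⟩ := u
  have hγ : γ = 0 := by
    simpa [beta, zero_pow hq0, hs] using h₀s
  subst hγ
  have hα : α ≠ 0 := by
    rintro rfl
    exact hu₀ (by simp [Isotropic, beta, zero_pow hq0])
  simp only [Prod.smul_mk, Prod.mk_add_mk, smul_eq_mul, zero_add] at hW hW0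
  have hz : z ≠ 0 := by
    rintro rfl
    exact hW0 (by simpa using hW)
  obtain ⟨a, rfl⟩ : ∃ a, x = z * a := ⟨x / z, (mul_div_cancel₀ x hz).symm⟩
  obtain ⟨b, rfl⟩ : ∃ b, w = z * b := ⟨w / z, (mul_div_cancel₀ w hz).symm⟩
  have hu_eq : ((z * a, z * b, z) : F × F × F) = z • (a, b, 1) := by simp [Prod.smul_mk]
  rw [hu_eq] at hu h₀u ⊢
  have hab := (isotropic_mk_one_iff a b).1 ((isotropic_smul_iff hz _).1 hu)
  have hβ : β = α * a ^ q := by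
    rw [beta_smul_right] at h₀u
    simp only [beta, one_pow, mul_one, zero_mul, add_zero, mul_eq_zero, pow_ne_zero _ hz,
      false_or] at h₀u
    linear_combination h₀u
  subst hβ
  have ha : a ≠ 1 := by
    rintro rfl
    exact hα (by linear_combination hW)
  have hνs : ν * s ≠ 0 := mul_ne_zero hν hs
  have hc : ℓ * α / (ν * s) ≠ 0 := div_ne_zero (mul_ne_zero hℓ hα) hνs
  refine ⟨a, b, ℓ * α / (ν * s), ha, hc, hab, ?_,
    detLine_smul_mk_eq_eqnLine hab hz hℓ hνs (div_mul_cancel₀ _ hνs)⟩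
  rw [mk_div_one_sub_eq_smul, Submodule.span_singleton_smul_eq (isUnit_iff_ne_zero.2 hz),
    Submodule.span_singleton_smul_eq
      (isUnit_iff_ne_zero.2 (div_ne_zero hc (sub_ne_zero.2 (Ne.symm ha))))]

lemma isNeighborOfInftyL_of_adjCond {p e r : ℕ} (hq0 : q ≠ 0) {y : F} (hy : y + y ^ q = 1)
    {lam ℓ : F} (hlam : lam ≠ 0) (hℓ : ℓ ≠ 0) {vL w : Flag F q}
    (hvL : vL.1 = (ptInfty F, lineL F q))
    (h : AdjCond F p q e r lam vL w ∨ AdjCond F p q e r lam w vL) :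
    IsNeighborOfInftyL q ℓ w.1.1 w.1.2 := by
  rcases h with ⟨i, -, u₁, u₂, u₀, -, -, hpt₁, -, hu₂, hpt₂, hu₀, hβ₁, hβ₂, hl₁, hl₂⟩ |
    ⟨i, -, u₁, u₂, u₀, -, hu₁, hpt₁, -, -, hpt₂, hu₀, hβ₁, hβ₂, hl₁, hl₂⟩
  · rw [hvL] at hpt₁ hl₁
    obtain ⟨s, hs, rfl⟩ := eq_mk_of_span_eq_ptInfty hpt₁.symm
    rw [hpt₂, hl₂]
    exact isNeighborOfInftyL_of_detLine_eq_lineL hq0 hy hℓ hs (pow_ne_zero _ hlam) hu₂ hu₀ hβ₁ hβ₂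
      (by rw [one_smul]; exact hl₁.symm)
  · rw [hvL] at hpt₂ hl₂
    obtain ⟨s, hs, rfl⟩ := eq_mk_of_span_eq_ptInfty hpt₂.symm
    rw [hpt₁, hl₁, ← one_smul F ((0 : F), s, (0 : F))]
    exact isNeighborOfInftyL_of_detLine_eq_lineL hq0 hy hℓ hs one_ne_zero hu₁ hu₀ hβ₂ hβ₁
      hl₂.symm

lemma adjCond_of_isNeighborOfInftyL {p e r : ℕ} (hq0 : q ≠ 0) (her : 0 < 2 * e / r) {lam : F}
    (hlam : lam ≠ 0) {vL w : Flag F q} (hvL : vL.1 = (ptInfty F, lineL F q))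
    (hw : IsNeighborOfInftyL q (lam ^ q) w.1.1 w.1.2) : AdjCond F p q e r lam vL w := by
  obtain ⟨a, b, c, ha, hc, hab, hpt, hl⟩ := hw
  have ha' : 1 - a ≠ 0 := sub_ne_zero.2 (Ne.symm ha)
  have hz : c / (1 - a) ≠ 0 := div_ne_zero hc ha'
  refine ⟨0, her, (0, 1, 0), (c / (1 - a)) • (a, b, 1), (c, c * a ^ q, 0), by simp,
    by simp [Isotropic, beta, zero_pow hq0], by rw [hvL]; rfl, smul_ne_zero hz (by simp),
    (isotropic_smul_iff hz _).2 ((isotropic_mk_one_iff a b).2 hab),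
    by rw [hpt, mk_div_one_sub_eq_smul], ?_, by simp [beta, zero_pow hq0], ?_, ?_, ?_⟩
  · simp [Isotropic, beta, zero_pow hq0, hc]
  · rw [beta_smul_right]
    simp [beta]
  · rw [hvL]
    have hW : c + c / (1 - a) * a = c / (1 - a) := by
      field_simp
      ring
    refine (detLine_ptInfty_eq_lineL one_ne_zero ?_ ?_).symm <;> simp [hW, hz]
  · rw [hl, zero_mul, pow_zero, mul_one]
    have hν : lam ^ q * 1 ≠ 0 := by rw [mul_one]; exact pow_ne_zero _ hlam
    exact (detLine_smul_mk_eq_eqnLine hab hz (pow_ne_zero _ hlam) hν (by ring)).symm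

lemma exists_add_pow_eq_one [Fintype F] {p e : ℕ} (hp : p.Prime) (hq : q = p ^ e) (hq1 : 1 < q)
    (hF : Fintype.card F = q ^ 2) : ∃ y : F, y + y ^ q = 1 := by
  have := Fact.mk hp
  have : CharP F p := charP_of_card_eq_prime_pow (f := e * 2) (by rw [hF, hq, pow_mul])
  have hinv (x : F) : (x ^ q) ^ q = x := by rw [← pow_mul, ← sq, ← hF, FiniteField.pow_card]
  obtain ⟨z, hz⟩ : ∃ z : F, z + z ^ q ≠ 0 := by
    by_contra! h
    have hdeg : (Polynomial.X ^ q + Polynomial.X : Polynomial F).natDegree = q := by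
      rw [Polynomial.natDegree_add_eq_left_of_natDegree_lt] <;> simp [hq1]
    have hroots : (Finset.univ : Finset F).val ⊆ (Polynomial.X ^ q + Polynomial.X).roots := by
      intro x _
      refine Polynomial.mem_roots'.2 ⟨fun h0 => ?_, by simpa [add_comm] using h x⟩
      simp only [h0, Polynomial.natDegree_zero] at hdeg
      omega
    have := Polynomial.card_le_degree_of_subset_roots hroots
    rw [Finset.card_univ, hF, hdeg] at this
    nlinarith
  have hfix : (z + z ^ q) ^ q = z + z ^ q := by
    rw [hq, add_pow_char_pow, ← hq, hinv, add_comm]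
  exact ⟨z / (z + z ^ q), by rw [div_pow, hfix, ← add_div, div_self hz]⟩

end

theorem stmt7_general (F : Type) [Field F] [Fintype F] (p q e r : ℕ)
    (hp : p.Prime) (he : 0 < e) (hq : q = p ^ e) (hq2 : 2 < q)
    (hr : 0 < r) (hre : r ∣ 2 * e) (hF : Fintype.card F = q ^ 2)
    (lam : F) (hlam : lam ≠ 0)
    (k : ℕ) (hk : 0 < k)
    (vL w : Flag F q) (hvL : vL.1 = (ptInfty F, lineL F q)) :
    (unitaryGraph F p q e r lam).Adj vL w ↔
      ∃ i < k, ∃ a b c : F, a ≠ 1 ∧ c ≠ 0 ∧ b + b ^ q = a ^ (q + 1) ∧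
        w.1.1 = Submodule.span F {(a * c / (1 - a), b * c / (1 - a), c / (1 - a))} ∧
        w.1.2 = eqnLine F q (lam ^ (q * p ^ (i * r)) + a ^ q * c) (-c)
          (-(lam ^ (q * p ^ (i * r)) * a + b ^ q * c)) := by
  have hq0 : q ≠ 0 := by omega
  have hℓ : lam ^ q ≠ 0 := pow_ne_zero _ hlam
  obtain ⟨y, hy⟩ := exists_add_pow_eq_one hp hq (by omega) hF
  rw [unitaryGraph, SimpleGraph.fromRel_adj]
  constructor
  · rintro ⟨-, hadj⟩
    refine ⟨0, hk, ?_⟩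
    rw [zero_mul, pow_zero, mul_one]
    exact isNeighborOfInftyL_of_adjCond hq0 hy hlam hℓ hvL hadj
  · rintro ⟨i, -, hw⟩
    have hw : IsNeighborOfInftyL q (lam ^ q) w.1.1 w.1.2 :=
      IsNeighborOfInftyL.of_ne_zero hw (pow_ne_zero _ hlam) hℓ
    have her : 0 < 2 * e / r := Nat.div_pos (Nat.le_of_dvd (by omega) hre) hr
    refine ⟨fun h => hw.ne_ptInfty ?_, Or.inl (adjCond_of_isNeighborOfInftyL hq0 her hlam hvL hw)⟩
    rw [← h, hvL]

theorem stmt7 (F : Type) [Field F] [Fintype F] (p q e r : ℕ)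
    (hp : p.Prime) (he : 0 < e) (hq : q = p ^ e) (hq2 : 2 < q)
    (hr : 0 < r) (hre : r ∣ 2 * e) (hF : Fintype.card F = q ^ 2)
    (lam : F) (hlam : lam ≠ 0)
    (hlamq : ∃ t : ℕ, t < 2 * e / r ∧ lam ^ p ^ (t * r) = lam ^ q)
    (k : ℕ) (hk : 0 < k) (hkfix : lam ^ p ^ (k * r) = lam)
    (hkmin : ∀ j : ℕ, 0 < j → lam ^ p ^ (j * r) = lam → k ≤ j)
    (vL w : Flag F q) (hvL : vL.1 = (ptInfty F, lineL F q)) :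
    (unitaryGraph F p q e r lam).Adj vL w ↔
      ∃ i < k, ∃ a b c : F, a ≠ 1 ∧ c ≠ 0 ∧ b + b ^ q = a ^ (q + 1) ∧
        w.1.1 = Submodule.span F {(a * c / (1 - a), b * c / (1 - a), c / (1 - a))} ∧
        w.1.2 = eqnLine F q (lam ^ (q * p ^ (i * r)) + a ^ q * c) (-c)
          (-(lam ^ (q * p ^ (i * r)) * a + b ^ q * c)) :=
  stmt7_general F p q e r hp he hq hq2 hr hre hF lam hlam k hk vL w hvL

end UnitaryGraphPaper
end

section
/- Let q = p^e > 2 be a prime power, r ≥ 1 a divisor of 2e, λ ∈ F* with λ^{p^{tr}} = λ^q for some 0 ≤ t < 2e/r, and k = k_{r,λ}(q). A flag (⟨u₂⟩, L₂) ∈ V(q) is adjacent to (0, L*) in Γ_{r,λ}(q) if and only if there exist an integer 0 ≤ i < k and f, g, h ∈ F* with g + g^q = f^{q+1} such that (i) u₂ is a scalar multiple of (fh, h, gh), and (ii) L₂ is the set of absolute points ⟨x,y,z⟩ satisfying (λ^{q p^{ir}} − f^{q+1} h)x − f(λ^{q p^{ir}} − g^q h)y + fhz = 0. -/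
/-!
The vector of the flag `(0, L*)` is a multiple of `(0, 0, 1)`; orthogonality to it kills the
`y`-coordinate of the nonisotropic centre `u₀`, so its `x`-coordinate is nonzero. Since
`∞ = ⟨0, 1, 0⟩` lies on `L*`, that `x`-coordinate is minus (a multiple of) the `x`-coordinate
of the other flag's vector, which is therefore `b • (f, 1, g)` with `g + g ^ q = f ^ (q + 1)`,
and orthogonality then fixes `u₀`. The remaining line is an explicit cross product. Scaling the
multiplier `μ` and `h` by a common factor does not change the line, so `i` is immaterial: every
neighbour has the stated form with `i = 0`, and conversely any witnesses can be rescaled to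
`i = 0`, where `u₂ = (f h, h, g h)` and `u₀ = (-f h, 0, -f ^ (q + 1) h)` realise the adjacency.
-/

namespace UnitaryGraphPaper

variable (F : Type) [Field F]

section NeighboursOfZero

variable {F} {q : ℕ}

lemma eqnLine_smul {s : F} (hs : s ≠ 0) (A B C : F) :
    eqnLine F q (s * A) (s * B) (s * C) = eqnLine F q A B C := by
  ext P
  refine exists_congr fun v => and_congr_right' (and_congr_right' (and_congr_right' ?_))
  constructor
  · intro h
    exact (mul_eq_zero.mp (by linear_combination h)).resolve_left hs
  · intro h
    linear_combination s * h

lemma lineLstar_eq_eqnLine : lineLstar F q = eqnLine F q 1 0 0 := by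
  ext P
  refine exists_congr fun v => and_congr_right' (and_congr_right' (and_congr_right' ?_))
  simp

lemma exists_eq_smul_of_span_eq {u v : F × F × F}
    (h : Submodule.span F {v} = Submodule.span F {u}) : ∃ c : F, c ≠ 0 ∧ u = c • v := by
  obtain ⟨c, rfl⟩ := Submodule.span_singleton_eq_span_singleton.mp h
  exact ⟨c, c.ne_zero, rfl⟩

lemma isotropic_mk (x y z : F) : Isotropic F q (x, y, z) ↔ x * x ^ q = y * z ^ q + z * y ^ q := by
  change -(x * x ^ q) + y * z ^ q + z * y ^ q = 0 ↔ _
  constructor <;> intro h <;> linear_combination -h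

lemma fst_eq_zero_of_isotropic (hq : q ≠ 0) {u : F × F × F} (hu : Isotropic F q u)
    (hy : u.2.1 = 0) : u.1 = 0 := by
  obtain ⟨x, y, z⟩ := u
  simp only at hy
  rw [isotropic_mk, hy, zero_pow hq] at hu
  simpa [hq] using hu

lemma fst_ne_zero_of_not_isotropic (hq : q ≠ 0) {u : F × F × F} (hu : ¬ Isotropic F q u)
    (hy : u.2.1 = 0) : u.1 ≠ 0 := by
  obtain ⟨x, y, z⟩ := u
  simp only at hy ⊢
  rintro rfl
  exact hu ((isotropic_mk _ _ _).mpr (by simp [hy, zero_pow hq]))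

lemma isotropic_normalForm {f g : F} (hfg : g + g ^ q = f ^ (q + 1)) (b : F) :
    Isotropic F q (f * b, b, g * b) := by
  rw [isotropic_mk]
  linear_combination -(b * b ^ q * hfg)

lemma ne_zero_of_add_pow_eq (hq : q ≠ 0) {f g : F} (hf : f ≠ 0) (hfg : g + g ^ q = f ^ (q + 1)) :
    g ≠ 0 := by
  rintro rfl
  exact hf ((pow_eq_zero_iff q.succ_ne_zero).mp (by rw [← hfg, zero_pow hq, add_zero]))

lemma exists_normalForm_of_isotropic {u : F × F × F} (hu : Isotropic F q u) (hb : u.2.1 ≠ 0) :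
    ∃ f g b : F, b ≠ 0 ∧ g + g ^ q = f ^ (q + 1) ∧ u = (f * b, b, g * b) := by
  obtain ⟨x, b, z⟩ := u
  refine ⟨x / b, z / b, b, hb, ?_, by simp [div_mul_cancel₀ _ hb]⟩
  rw [isotropic_mk] at hu
  simp only at hb
  rw [div_pow, div_pow, div_add_div _ _ hb (pow_ne_zero _ hb),
    div_eq_div_iff (mul_ne_zero hb (pow_ne_zero _ hb)) (pow_ne_zero _ hb)]
  linear_combination -(b ^ (q + 1) * hu)

lemma snd_fst_eq_zero_of_beta_eq_zero (hq : q ≠ 0) {u : F × F × F} {c : F} (hc : c ≠ 0)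
    (h : beta F q u (c • (0, 0, 1)) = 0) : u.2.1 = 0 := by
  simpa [beta, zero_pow hq, hc] using h

lemma fst_eq_zero_of_lineLstar_eq_detLine (hq : q ≠ 0) {w : F × F × F} {c : F} (hc : c ≠ 0)
    (h : lineLstar F q = detLine F q (c • (0, 0, 1)) w) : w.1 = 0 := by
  have hmem : ptInfty F ∈ lineLstar F q :=
    ⟨(0, 1, 0), by simp, by simp [isotropic_mk, zero_pow hq], rfl, rfl⟩
  rw [h, detLine_eq_eqnLine] at hmem
  obtain ⟨v, -, -, hspan, hv⟩ := hmem
  obtain ⟨a, ha, rfl⟩ := exists_eq_smul_of_span_eq hspan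
  simpa [ha, hc] using hv

lemma normalForm_of_beta_eq_zero (hq : q ≠ 0) {s : F} {u u₀ : F × F × F} (hu : Isotropic F q u)
    (hu₀ : ¬ Isotropic F q u₀) (hy : u₀.2.1 = 0) (hβ : beta F q u₀ u = 0)
    (hx : u₀.1 + s * u.1 = 0) :
    s ≠ 0 ∧ ∃ f g b : F, f ≠ 0 ∧ b ≠ 0 ∧ g + g ^ q = f ^ (q + 1) ∧ u = (f * b, b, g * b) ∧
      u₀ = (-(s * (f * b)), 0, -(s * (f ^ (q + 1) * b))) := by
  have hsu : s * u.1 ≠ 0 := by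
    intro h
    exact fst_ne_zero_of_not_isotropic hq hu₀ hy (by linear_combination hx - h)
  obtain ⟨f, g, b, hb, hfg, rfl⟩ := exists_normalForm_of_isotropic hu
    fun h => right_ne_zero_of_mul hsu (fst_eq_zero_of_isotropic hq hu h)
  obtain ⟨x₀, y₀, z₀⟩ := u₀
  simp only at hy hx hsu
  subst hy
  have hx₀ : x₀ = -(s * (f * b)) := by linear_combination hx
  subst hx₀
  refine ⟨left_ne_zero_of_mul hsu, f, g, b, left_ne_zero_of_mul (right_ne_zero_of_mul hsu), hb,
    hfg, rfl, ?_⟩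
  have hz₀ : z₀ * b ^ q = -(s * (f ^ (q + 1) * b)) * b ^ q := by
    simp only [beta] at hβ
    linear_combination hβ
  rw [mul_left_injective₀ (pow_ne_zero q hb) hz₀]

lemma detLine_normalForm {f g b : F} (hfg : g + g ^ q = f ^ (q + 1)) (hb : b ≠ 0) (s t : F) :
    detLine F q (f * b, b, g * b) (-(s * (f * b)), 0, t - s * (f ^ (q + 1) * b)) =
      eqnLine F q (t - f ^ (q + 1) * (s * b)) (-(f * (t - g ^ q * (s * b)))) (f * (s * b)) := by
  rw [detLine_eq_eqnLine]
  conv_rhs => rw [← eqnLine_smul hb]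
  congr 1
  · ring
  · linear_combination -(s * f * b ^ 2 * hfg)
  · ring

lemma span_normalForm_smul {f g h s : F} (hs : s ≠ 0) :
    Submodule.span F {(f * (s * h), s * h, g * (s * h))} =
      Submodule.span F {(f * h, h, g * h)} := by
  conv_rhs => rw [← Submodule.span_singleton_smul_eq (IsUnit.mk0 s hs)]
  congr 2
  simp only [Prod.smul_mk, smul_eq_mul]
  ext <;> simp only <;> ring

def HasNeighbourForm (μ : F) (w : Flag F q) : Prop :=
  ∃ f g h : F, f ≠ 0 ∧ g ≠ 0 ∧ h ≠ 0 ∧ g + g ^ q = f ^ (q + 1) ∧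
    w.1.1 = Submodule.span F {(f * h, h, g * h)} ∧
    w.1.2 = eqnLine F q (μ - f ^ (q + 1) * h) (-(f * (μ - g ^ q * h))) (f * h)

lemma HasNeighbourForm.of_ne_zero {μ μ' : F} {w : Flag F q} (hw : HasNeighbourForm μ w)
    (hμ : μ ≠ 0) (hμ' : μ' ≠ 0) : HasNeighbourForm μ' w := by
  obtain ⟨f, g, h, hf, hg, hh, hfg, hpt, hl⟩ := hw
  have hs : μ' / μ ≠ 0 := div_ne_zero hμ' hμ
  refine ⟨f, g, μ' / μ * h, hf, hg, mul_ne_zero hs hh, hfg,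
    by rw [hpt, span_normalForm_smul hs], ?_⟩
  rw [hl, ← eqnLine_smul hs]
  congr 1 <;> field_simp

lemma hasNeighbourForm_of_eq_detLine (hq : q ≠ 0) {f g b s t ν : F}
    (hfg : g + g ^ q = f ^ (q + 1)) (hf : f ≠ 0) (hb : b ≠ 0) (hs : s ≠ 0) (ht : t ≠ 0)
    (hν : ν ≠ 0) {w : Flag F q} (hpt : w.1.1 = Submodule.span F {(f * b, b, g * b)})
    (hl : w.1.2 = detLine F q (f * b, b, g * b) (-(s * (f * b)), 0, t - s * (f ^ (q + 1) * b))) :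
    HasNeighbourForm ν w :=
  HasNeighbourForm.of_ne_zero
    ⟨f, g, s * b, hf, ne_zero_of_add_pow_eq hq hf hfg, mul_ne_zero hs hb, hfg,
      by rw [hpt, span_normalForm_smul hs], by rw [hl, detLine_normalForm hfg hb]⟩ ht hν

variable {p e r : ℕ} {lam : F} {vL w : Flag F q}

lemma hasNeighbourForm_of_adjCond_left (hq : q ≠ 0) (hlam : lam ≠ 0) {ν : F} (hν : ν ≠ 0)
    (hvL : vL.1 = (ptZero F, lineLstar F q)) (hadj : AdjCond F p q e r lam vL w) :
    HasNeighbourForm ν w := by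
  obtain ⟨i, -, u₁, u₂, u₀, -, -, h₁, -, hu₂, h₂, hu₀, hβ₁, hβ₂, hl₁, hl₂⟩ := hadj
  rw [hvL] at h₁ hl₁
  obtain ⟨c, hc, rfl⟩ := exists_eq_smul_of_span_eq h₁
  have hx := fst_eq_zero_of_lineLstar_eq_detLine hq hc hl₁
  obtain ⟨-, f, g, b, hf, hb, hfg, rfl, rfl⟩ := normalForm_of_beta_eq_zero hq (s := 1) hu₂ hu₀
    (snd_fst_eq_zero_of_beta_eq_zero hq hc hβ₁) hβ₂ (by simpa using hx)
  refine hasNeighbourForm_of_eq_detLine (t := lam ^ (q * p ^ (i * r)) * c) hq hfg hf hb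
    one_ne_zero (mul_ne_zero (pow_ne_zero _ hlam) hc) hν h₂ ?_
  rw [hl₂]
  congr 1
  simp only [one_mul, Prod.smul_mk, smul_eq_mul, mul_zero, mul_one, Prod.mk_add_mk, add_zero,
    Prod.ext_iff, true_and]
  ring

lemma hasNeighbourForm_of_adjCond_right (hq : q ≠ 0) {ν : F} (hν : ν ≠ 0)
    (hvL : vL.1 = (ptZero F, lineLstar F q)) (hadj : AdjCond F p q e r lam w vL) :
    HasNeighbourForm ν w := by
  obtain ⟨i, -, u₁, u₂, u₀, -, hu₁, h₁, -, -, h₂, hu₀, hβ₁, hβ₂, hl₁, hl₂⟩ := hadj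
  rw [hvL] at h₂ hl₂
  obtain ⟨c, hc, rfl⟩ := exists_eq_smul_of_span_eq h₂
  have hx := fst_eq_zero_of_lineLstar_eq_detLine hq hc hl₂
  obtain ⟨hs, f, g, b, hf, hb, hfg, rfl, rfl⟩ := normalForm_of_beta_eq_zero hq hu₁ hu₀
    (snd_fst_eq_zero_of_beta_eq_zero hq hc hβ₂) hβ₁ (by simpa using hx)
  refine hasNeighbourForm_of_eq_detLine hq hfg hf hb hs hc hν h₁ ?_
  rw [hl₁]
  congr 1
  simp only [Prod.smul_mk, smul_eq_mul, mul_zero, mul_one, Prod.mk_add_mk, add_zero, Prod.ext_iff,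
    true_and]
  ring

lemma adjCond_of_hasNeighbourForm (hq : q ≠ 0) {i : ℕ} (hi : i < 2 * e / r)
    (hvL : vL.1 = (ptZero F, lineLstar F q))
    (hw : HasNeighbourForm (lam ^ (q * p ^ (i * r))) w) : AdjCond F p q e r lam vL w := by
  obtain ⟨f, g, h, hf, -, hh, hfg, hpt, hl⟩ := hw
  refine ⟨i, hi, (0, 0, 1), (f * h, h, g * h), (-(f * h), 0, -(f ^ (q + 1) * h)), by simp,
    by simp [isotropic_mk, zero_pow hq], by rw [hvL]; rfl, by simp [hh], isotropic_normalForm hfg h,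
    hpt, fun hiso => mul_ne_zero hf hh (neg_eq_zero.mp (fst_eq_zero_of_isotropic hq hiso rfl)),
    by simp [beta, zero_pow hq], by simp only [beta]; ring, ?_, ?_⟩
  · rw [hvL, lineLstar_eq_eqnLine, detLine_eq_eqnLine, ← eqnLine_smul (neg_ne_zero.mpr hh)]
    simp
  · have hnf := detLine_normalForm (q := q) hfg hh 1 (lam ^ (q * p ^ (i * r)))
    simp only [one_mul] at hnf
    rw [hl, ← hnf]
    congr 1
    simp only [Prod.smul_mk, smul_eq_mul, mul_zero, mul_one, Prod.mk_add_mk, add_zero,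
      Prod.ext_iff, true_and]
    ring

lemma ne_of_hasNeighbourForm {μ : F} (hvL : vL.1 = (ptZero F, lineLstar F q))
    (hw : HasNeighbourForm μ w) : vL ≠ w := by
  rintro rfl
  obtain ⟨f, g, h, -, -, hh, -, hpt, -⟩ := hw
  rw [hvL] at hpt
  obtain ⟨c, -, hc⟩ := exists_eq_smul_of_span_eq hpt
  exact hh (by simpa using congrArg (fun v => v.2.1) hc)

end NeighboursOfZero

theorem stmt10_general (F : Type) [Field F] (p q e r : ℕ)
    (he : 0 < e) (hq2 : 2 < q)
    (hr : 0 < r) (hre : r ∣ 2 * e)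
    (lam : F) (hlam : lam ≠ 0)
    (k : ℕ) (hk : 0 < k)
    (vL w : Flag F q) (hvL : vL.1 = (ptZero F, lineLstar F q)) :
    (unitaryGraph F p q e r lam).Adj vL w ↔
      ∃ i < k, ∃ f g h : F, f ≠ 0 ∧ g ≠ 0 ∧ h ≠ 0 ∧ g + g ^ q = f ^ (q + 1) ∧
        w.1.1 = Submodule.span F {(f * h, h, g * h)} ∧
        w.1.2 = eqnLine F q (lam ^ (q * p ^ (i * r)) - f ^ (q + 1) * h)
          (-(f * (lam ^ (q * p ^ (i * r)) - g ^ q * h))) (f * h) := by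
  have hq : q ≠ 0 := by omega
  have hμ (i : ℕ) : lam ^ (q * p ^ (i * r)) ≠ 0 := pow_ne_zero _ hlam
  rw [unitaryGraph, SimpleGraph.fromRel_adj]
  constructor
  · rintro ⟨-, hadj | hadj⟩
    · exact ⟨0, hk, hasNeighbourForm_of_adjCond_left hq hlam (hμ 0) hvL hadj⟩
    · exact ⟨0, hk, hasNeighbourForm_of_adjCond_right hq (hμ 0) hvL hadj⟩
  · rintro ⟨i, -, hw⟩
    have hw₀ : HasNeighbourForm (lam ^ (q * p ^ (0 * r))) w :=
      HasNeighbourForm.of_ne_zero hw (hμ i) (hμ 0)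
    have h2er : 0 < 2 * e / r := Nat.div_pos (Nat.le_of_dvd (by omega) hre) hr
    exact ⟨ne_of_hasNeighbourForm hvL hw₀, Or.inl (adjCond_of_hasNeighbourForm hq h2er hvL hw₀)⟩

theorem stmt10 (F : Type) [Field F] [Fintype F] (p q e r : ℕ)
    (hp : p.Prime) (he : 0 < e) (hq : q = p ^ e) (hq2 : 2 < q)
    (hr : 0 < r) (hre : r ∣ 2 * e) (hF : Fintype.card F = q ^ 2)
    (lam : F) (hlam : lam ≠ 0)
    (hlamq : ∃ t : ℕ, t < 2 * e / r ∧ lam ^ p ^ (t * r) = lam ^ q)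
    (k : ℕ) (hk : 0 < k) (hkfix : lam ^ p ^ (k * r) = lam)
    (hkmin : ∀ j : ℕ, 0 < j → lam ^ p ^ (j * r) = lam → k ≤ j)
    (vL w : Flag F q) (hvL : vL.1 = (ptZero F, lineLstar F q)) :
    (unitaryGraph F p q e r lam).Adj vL w ↔
      ∃ i < k, ∃ f g h : F, f ≠ 0 ∧ g ≠ 0 ∧ h ≠ 0 ∧ g + g ^ q = f ^ (q + 1) ∧
        w.1.1 = Submodule.span F {(f * h, h, g * h)} ∧
        w.1.2 = eqnLine F q (lam ^ (q * p ^ (i * r)) - f ^ (q + 1) * h)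
          (-(f * (lam ^ (q * p ^ (i * r)) - g ^ q * h))) (f * h) :=
  stmt10_general F p q e r he hq2 hr hre lam hlam k hk vL w hvL

end UnitaryGraphPaper
end
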